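/- arXiv:2305.10465 — 2 statements merged into one kernel-verified Lean document; each statement's English description precedes it below -/
import Mathlib

section
/- Let A be a real 3×3 matrix with proper singular value decomposition A = U · diag(s₁, s₂, s₃) · Vᵀ, where U, V ∈ SO(3), s₁ ≥ s₂ ≥ |s₃|, and suppose s₂ + s₃ > 0. Then for R ∈ SO(3), the equality tr(Aᵀ R) = s₁ + s₂ + s₃ holds if and only if R = U Vᵀ. Consequently the mode of the rotation Laplace distribution (equivalently, of the matrix Fisher distribution) with parameter A is the unique rotation R₀ = U Vᵀ. -/
/-!
Put `Q = Uᵀ R V ∈ SO(3)`, so that `tr(AᵀR) = s₁ Q₁₁ + s₂ Q₂₂ + s₃ Q₃₃` and `R = UVᵀ ↔ Q = I`.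
The diagonal entries of an orthogonal matrix are at most `1`, and since `diag(-1, -1, 1) Q` is
again a rotation, whose trace is at least `-1`, also `Q₁₁ + Q₂₂ - Q₃₃ ≤ 1`. Writing
`s₁ + s₂ + s₃ - ∑ sᵢ Qᵢᵢ` as a nonnegative combination of `1 - Q₁₁`, `1 + Q₃₃ - Q₁₁ - Q₂₂` and
`3 - tr Q`, in which `3 - tr Q` carries the weight `(s₂ + s₃)/2 > 0`, equality forces `tr Q = 3`,
and an orthogonal matrix of trace `3` is the identity.
-/

open Matrix

/-- `SO3 R` means `R` is a rotation matrix: `RᵀR = I` and `det R = 1`. -/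
def SO3 (R : Matrix (Fin 3) (Fin 3) ℝ) : Prop :=
  Rᵀ * R = 1 ∧ R.det = 1

namespace Matrix

variable {n : Type*} [Fintype n]

theorem trace_transpose_mul_mul_transpose_mul {R : Type*} [CommSemiring R]
    (U D V M : Matrix n n R) : ((U * D * Vᵀ)ᵀ * M).trace = (Dᵀ * (Uᵀ * M * V)).trace := by
  rw [transpose_mul, transpose_mul, transpose_transpose, trace_mul_cycle, trace_mul_cycle]
  simp only [Matrix.mul_assoc]

variable [DecidableEq n]

theorem trace_diagonal_mul {R : Type*} [NonUnitalNonAssocSemiring R] (d : n → R)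
    (M : Matrix n n R) : (diagonal d * M).trace = ∑ i, d i * M i i := by
  simp [trace, diagonal_mul]

theorem diag_le_one_of_transpose_mul_self_eq_one {Q : Matrix n n ℝ} (hQ : Qᵀ * Q = 1) (i : n) :
    Q i i ≤ 1 := by
  have hcol : ∑ k, Q k i ^ 2 = 1 := by
    simpa [mul_apply, sq] using congrFun (congrFun hQ i) i
  have hsq : Q i i ^ 2 ≤ 1 :=
    hcol ▸ Finset.single_le_sum (fun k _ => sq_nonneg (Q k i)) (Finset.mem_univ i)
  exact le_of_abs_le ((sq_le_one_iff_abs_le_one _).mp hsq)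

/-- `‖Q - I‖² = tr((Q - I)ᵀ(Q - I)) = 2n - 2 tr Q` for orthogonal `Q`. -/
theorem eq_one_of_transpose_mul_self_eq_one_of_trace_eq_card {Q : Matrix n n ℝ}
    (hQ : Qᵀ * Q = 1) (htr : Q.trace = Fintype.card n) : Q = 1 := by
  have h : ((Q - 1)ᴴ * (Q - 1)).trace = 0 := by
    simp [conjTranspose_eq_transpose_of_trivial, sub_mul, mul_sub, hQ, trace_sub, htr]
  exact sub_eq_zero.mp (trace_conjTranspose_mul_self_eq_zero_iff.mp h)

end Matrix

theorem sum_eq_three_of_weighted_sum_eq {s₁ s₂ s₃ q₁ q₂ q₃ : ℝ}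
    (h12 : s₂ ≤ s₁) (h23 : s₃ ≤ s₂) (hpos : 0 < s₂ + s₃)
    (hq₁ : q₁ ≤ 1) (hq₂ : q₂ ≤ 1) (hq₃ : q₃ ≤ 1) (hflip : -1 ≤ -q₁ - q₂ + q₃)
    (heq : s₁ * q₁ + s₂ * q₂ + s₃ * q₃ = s₁ + s₂ + s₃) :
    q₁ + q₂ + q₃ = 3 := by
  have hsplit : (s₁ - s₂) * (1 - q₁) + (s₂ + s₃) / 2 * (3 - q₁ - q₂ - q₃)
      + (s₂ - s₃) / 2 * (1 + (-q₁ - q₂ + q₃)) = 0 := by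
    linear_combination -heq
  have h₁ : 0 ≤ (s₁ - s₂) * (1 - q₁) := mul_nonneg (by linarith) (by linarith)
  have h₃ : 0 ≤ (s₂ - s₃) / 2 * (1 + (-q₁ - q₂ + q₃)) := mul_nonneg (by linarith) (by linarith)
  have h₂ : (s₂ + s₃) / 2 * (3 - q₁ - q₂ - q₃) ≤ 0 := by linarith
  have : 3 - q₁ - q₂ - q₃ ≤ 0 := nonpos_of_mul_nonpos_right h₂ (by linarith)
  linarith

namespace SO3

variable {Q R U V : Matrix (Fin 3) (Fin 3) ℝ}

theorem mul_transpose_self (hR : SO3 R) : R * Rᵀ = 1 := mul_eq_one_comm.mp hR.1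

theorem mul (hQ : SO3 Q) (hR : SO3 R) : SO3 (Q * R) := by
  refine ⟨?_, by rw [det_mul, hQ.2, hR.2, one_mul]⟩
  rw [transpose_mul, Matrix.mul_assoc, ← Matrix.mul_assoc Qᵀ, hQ.1, Matrix.one_mul, hR.1]

theorem transpose (hR : SO3 R) : SO3 Rᵀ :=
  ⟨by rw [transpose_transpose, hR.mul_transpose_self], by rw [det_transpose, hR.2]⟩

theorem diagonal_neg_one_neg_one_one : SO3 (diagonal ![-1, -1, 1]) := by
  refine ⟨?_, by simp [Fin.prod_univ_three]⟩
  rw [diagonal_transpose, diagonal_mul_diagonal, ← diagonal_one]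
  congr 1
  ext i
  fin_cases i <;> simp

theorem adjugate_eq_transpose (hQ : SO3 Q) : Q.adjugate = Qᵀ := by
  rw [← inv_eq_left_inv hQ.1, inv_def, hQ.2, Ring.inverse_one, one_smul]

theorem neg_one_le_trace (hQ : SO3 Q) : -1 ≤ Q.trace := by
  have hcol (i j : Fin 3) :
      Q 0 i * Q 0 j + Q 1 i * Q 1 j + Q 2 i * Q 2 j = (1 : Matrix (Fin 3) (Fin 3) ℝ) i j := by
    simpa [mul_apply, Fin.sum_univ_three] using congrFun (congrFun hQ.1 i) j
  have hcof (j : Fin 3) : Q.adjugate 0 j = Q j 0 := by rw [hQ.adjugate_eq_transpose]; rfl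
  have c00 := hcol 0 0
  have c11 := hcol 1 1
  have c22 := hcol 2 2
  have c12 := hcol 1 2
  have e0 := hcof 0
  have e1 := hcof 1
  have e2 := hcof 2
  simp only [Fin.isValue, one_apply_eq, ne_eq, Fin.reduceEq, not_false_eq_true, one_apply_ne,
    adjugate_fin_three, of_apply, cons_val', cons_val_zero, cons_val_fin_one, cons_val_one,
    cons_val] at c00 c11 c22 c12 e0 e1 e2
  rw [trace_fin_three]
  -- With `1 + tr Q = 4w²`, `Q₃₂ - Q₂₃ = 4wx`, … for a unit quaternion `(w, x, y, z)` of `Q`,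
  -- this is `w² = w² (w² + x² + y² + z²)`.
  have hsos : 4 * (1 + (Q 0 0 + Q 1 1 + Q 2 2)) = (Q 2 1 - Q 1 2) ^ 2 + (Q 0 2 - Q 2 0) ^ 2
      + (Q 1 0 - Q 0 1) ^ 2 + (1 + (Q 0 0 + Q 1 1 + Q 2 2)) ^ 2 := by
    linear_combination (-1) * c00 + (-1 - 2 * Q 2 2) * c11 + (-1 - 2 * Q 1 1) * c22
      + (2 * Q 1 2 + 2 * Q 2 1) * c12 + (-2 + 2 * Q 1 1 + 2 * Q 2 2) * e0
      + (-2 * Q 0 1) * e1 + (-2 * Q 0 2) * e2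
  linarith [sq_nonneg (Q 2 1 - Q 1 2), sq_nonneg (Q 0 2 - Q 2 0), sq_nonneg (Q 1 0 - Q 0 1),
    sq_nonneg (1 + (Q 0 0 + Q 1 1 + Q 2 2))]

theorem eq_one_of_weighted_diag_eq {s₁ s₂ s₃ : ℝ} (hQ : SO3 Q)
    (h12 : s₂ ≤ s₁) (h23 : s₃ ≤ s₂) (hpos : 0 < s₂ + s₃)
    (heq : s₁ * Q 0 0 + s₂ * Q 1 1 + s₃ * Q 2 2 = s₁ + s₂ + s₃) : Q = 1 := by
  have hdiag := diag_le_one_of_transpose_mul_self_eq_one hQ.1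
  have hflip := (diagonal_neg_one_neg_one_one.mul hQ).neg_one_le_trace
  simp only [trace_diagonal_mul, Fin.sum_univ_three, Fin.isValue, cons_val_zero, neg_mul,
    one_mul, cons_val_one, cons_val] at hflip
  refine eq_one_of_transpose_mul_self_eq_one_of_trace_eq_card hQ.1 ?_
  rw [trace_fin_three, Fintype.card_fin, Nat.cast_ofNat]
  exact sum_eq_three_of_weighted_sum_eq h12 h23 hpos (hdiag 0) (hdiag 1) (hdiag 2)
    (by linarith) heq

theorem eq_mul_transpose_iff (hU : SO3 U) (hV : SO3 V) : R = U * Vᵀ ↔ Uᵀ * R * V = 1 := by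
  constructor
  · rintro rfl
    rw [Matrix.mul_assoc, Matrix.mul_assoc, hV.1, Matrix.mul_one, hU.1]
  · intro h
    calc R = U * (Uᵀ * R * V) * Vᵀ := by
          rw [← Matrix.mul_assoc, ← Matrix.mul_assoc, hU.mul_transpose_self, Matrix.one_mul,
            Matrix.mul_assoc, hV.mul_transpose_self, Matrix.mul_one]
      _ = U * Vᵀ := by rw [h, Matrix.mul_one]

end SO3

/-- If `A = U · diag(s₁, s₂, s₃) · Vᵀ` is a proper SVD of `A` with `s₂ + s₃ > 0`, then
for rotations `R`, equality `tr(AᵀR) = s₁ + s₂ + s₃` holds iff `R = UVᵀ`.  Hence the mode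
of the rotation Laplace (equivalently, matrix Fisher) distribution with parameter `A`
is the unique rotation `R₀ = UVᵀ`. -/
theorem trace_eq_sum_singular_values_iff_mode
    (A U V : Matrix (Fin 3) (Fin 3) ℝ) (s₁ s₂ s₃ : ℝ)
    (hU : SO3 U) (hV : SO3 V) (h12 : s₁ ≥ s₂) (h23 : s₂ ≥ |s₃|)
    (hpos : s₂ + s₃ > 0)
    (hA : A = U * Matrix.diagonal ![s₁, s₂, s₃] * Vᵀ)
    (R : Matrix (Fin 3) (Fin 3) ℝ) (hR : SO3 R) :
    (Aᵀ * R).trace = s₁ + s₂ + s₃ ↔ R = U * Vᵀ := by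
  set Q := Uᵀ * R * V with hQ_def
  have hQ : SO3 Q := (hU.transpose.mul hR).mul hV
  have htrace : (Aᵀ * R).trace = s₁ * Q 0 0 + s₂ * Q 1 1 + s₃ * Q 2 2 := by
    rw [hA, trace_transpose_mul_mul_transpose_mul, diagonal_transpose, trace_diagonal_mul,
      Fin.sum_univ_three]
    rfl
  rw [htrace, SO3.eq_mul_transpose_iff hU hV, ← hQ_def]
  constructor
  · exact hQ.eq_one_of_weighted_diag_eq h12 ((le_abs_self s₃).trans h23) hpos
  · rintro hQ_one
    simp [hQ_one]
end

section
/- Let A be a real 3×3 matrix with proper singular value decomposition A = U · S · Vᵀ, where U, V ∈ SO(3) and S = diag(s₁, s₂, s₃). Then for every nonzero ψ = (ψ₁, ψ₂, ψ₃) ∈ ℝ³ with θ = ‖ψ‖, the rotation R = U · exp(ψ̂) · Vᵀ satisfies tr(S − Aᵀ R) = ((1 − cos θ)/θ²) · ((s₂ + s₃)ψ₁² + (s₁ + s₃)ψ₂² + (s₁ + s₂)ψ₃²). -/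
/-! Since `ψ̂³ = -θ² ψ̂`, the exponential series collapses to Rodrigues' formula
`exp ψ̂ = I + (sin θ / θ) ψ̂ + ((1 - cos θ) / θ²) ψ̂²`. Orthogonality of `U` and `V` turns
`tr (AᵀR)` into `tr (S exp ψ̂)`; here `tr (S ψ̂) = 0` because `S` is diagonal and `ψ̂` has zero
diagonal, while `tr (S ψ̂²) = -((s₂ + s₃) ψ₁² + (s₁ + s₃) ψ₂² + (s₁ + s₂) ψ₃²)`. -/

open Matrix

/-- The skew-symmetric "hat" matrix of a vector `ψ ∈ ℝ³`. -/
def hat (ψ : EuclideanSpace ℝ (Fin 3)) : Matrix (Fin 3) (Fin 3) ℝ :=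
  !![0, -ψ 2, ψ 1;
     ψ 2, 0, -ψ 0;
     -ψ 1, ψ 0, 0]

section PowThree

variable {R 𝔸 : Type*} [CommSemiring R] [Semiring 𝔸] [Algebra R 𝔸]

theorem pow_two_mul_add_one_of_pow_three_eq {x : 𝔸} {c : R} (h : x ^ 3 = c • x) (k : ℕ) :
    x ^ (2 * k + 1) = c ^ k • x := by
  induction k with
  | zero => simp
  | succ k ih =>
    rw [show 2 * (k + 1) + 1 = 2 + (2 * k + 1) by ring, pow_add, ih, mul_smul_comm,
      ← pow_succ, h, smul_smul, pow_succ]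

theorem pow_two_mul_add_two_of_pow_three_eq {x : 𝔸} {c : R} (h : x ^ 3 = c • x) (k : ℕ) :
    x ^ (2 * k + 2) = c ^ k • x ^ 2 := by
  rw [pow_succ, pow_two_mul_add_one_of_pow_three_eq h, smul_mul_assoc, ← pow_two]

end PowThree

section Rodrigues

open NormedSpace Nat

variable {𝔸 : Type*} [NormedRing 𝔸] [NormedAlgebra ℝ 𝔸] [CompleteSpace 𝔸]

theorem exp_eq_rodrigues_of_pow_three_eq {x : 𝔸} {θ : ℝ} (hθ : θ ≠ 0)
    (h : x ^ 3 = (-θ ^ 2) • x) :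
    exp x = 1 + (Real.sin θ / θ) • x + ((1 - Real.cos θ) / θ ^ 2) • x ^ 2 := by
  let f : ℕ → 𝔸 := fun n => (n ! : ℝ)⁻¹ • x ^ n
  have hodd : HasSum (fun k => f (2 * k + 1)) ((Real.sin θ / θ) • x) := by
    convert ((Real.hasSum_sin θ).div_const θ).smul_const x using 2 with k
    simp only [f]
    rw [pow_two_mul_add_one_of_pow_three_eq h, smul_smul]
    congr 1
    rw [neg_pow, ← pow_mul, pow_succ]
    field_simp
  have heven_succ : HasSum (fun k => f (2 * (k + 1))) (((1 - Real.cos θ) / θ ^ 2) • x ^ 2) := by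
    have hcos := (hasSum_nat_add_iff' 1).mpr (Real.hasSum_cos θ)
    convert ((hcos.neg).div_const (θ ^ 2)).smul_const (x ^ 2) using 2 with k
    · simp only [f, mul_add, mul_one]
      rw [pow_two_mul_add_two_of_pow_three_eq h, smul_smul]
      congr 1
      rw [neg_pow, ← pow_mul]
      field_simp
      ring
    · simp
  have heven : HasSum (fun k => f (2 * k)) (1 + ((1 - Real.cos θ) / θ ^ 2) • x ^ 2) := by
    convert HasSum.zero_add (f := fun k => f (2 * k)) heven_succ using 2
    simp [f]
  have hexp : HasSum f (1 + ((1 - Real.cos θ) / θ ^ 2) • x ^ 2 + (Real.sin θ / θ) • x) :=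
    heven.even_add_odd hodd
  rw [add_right_comm] at hexp
  exact (exp_series_hasSum_exp' x).unique hexp

end Rodrigues

theorem Matrix.trace_transpose_mul_of_orthogonal {n R : Type*} [Fintype n] [DecidableEq n]
    [CommRing R] {U V : Matrix n n R} (hU : Uᵀ * U = 1) (hV : Vᵀ * V = 1) (S E : Matrix n n R) :
    ((U * S * Vᵀ)ᵀ * (U * E * Vᵀ)).trace = (Sᵀ * E).trace := by
  have hconj : (U * S * Vᵀ)ᵀ * (U * E * Vᵀ) = V * (Sᵀ * E) * Vᵀ := by
    simp only [transpose_mul, transpose_transpose, Matrix.mul_assoc]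
    rw [← Matrix.mul_assoc Uᵀ U, hU, Matrix.one_mul]
  rw [hconj, trace_mul_cycle, hV, Matrix.one_mul]

theorem hat_pow_three (ψ : EuclideanSpace ℝ (Fin 3)) : hat ψ ^ 3 = (-‖ψ‖ ^ 2) • hat ψ := by
  rw [EuclideanSpace.norm_sq_eq]
  ext i j
  fin_cases i <;> fin_cases j <;>
    simp [hat, pow_succ, Matrix.mul_apply, Fin.sum_univ_three] <;> ring

theorem trace_diagonal_mul_hat (s : Fin 3 → ℝ) (ψ : EuclideanSpace ℝ (Fin 3)) :
    (diagonal s * hat ψ).trace = 0 := by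
  simp [trace, Fin.sum_univ_three, hat]

theorem trace_diagonal_mul_hat_sq (s : Fin 3 → ℝ) (ψ : EuclideanSpace ℝ (Fin 3)) :
    (diagonal s * hat ψ ^ 2).trace
      = -((s 1 + s 2) * ψ 0 ^ 2 + (s 0 + s 2) * ψ 1 ^ 2 + (s 0 + s 1) * ψ 2 ^ 2) := by
  simp [trace, pow_two, Matrix.mul_apply, Fin.sum_univ_three, hat]
  ring

-- `NormedSpace.exp` does not depend on the norm; this one only serves the series lemmas.
attribute [local instance] Matrix.linftyOpNormedRing Matrix.linftyOpNormedAlgebra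

/-- If `A = U · S · Vᵀ` with `U, V ∈ SO(3)` and `S = diag(s₁, s₂, s₃)`, then for every
nonzero `ψ ∈ ℝ³` with `θ = ‖ψ‖`, the rotation `R = U exp(ψ̂) Vᵀ` satisfies
`tr(S − AᵀR) = ((1 − cos θ)/θ²)((s₂+s₃)ψ₁² + (s₁+s₃)ψ₂² + (s₁+s₂)ψ₃²)`. -/
theorem trace_S_sub_AT_R_of_exp_hat
    (A U V : Matrix (Fin 3) (Fin 3) ℝ) (s₁ s₂ s₃ : ℝ)
    (hU : SO3 U) (hV : SO3 V)
    (hA : A = U * Matrix.diagonal ![s₁, s₂, s₃] * Vᵀ)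
    (ψ : EuclideanSpace ℝ (Fin 3)) (hψ : ψ ≠ 0) (θ : ℝ) (hθ : θ = ‖ψ‖) :
    (Matrix.diagonal ![s₁, s₂, s₃] - Aᵀ * (U * NormedSpace.exp (hat ψ) * Vᵀ)).trace
      = ((1 - Real.cos θ) / θ ^ 2)
          * ((s₂ + s₃) * ψ 0 ^ 2 + (s₁ + s₃) * ψ 1 ^ 2 + (s₁ + s₂) * ψ 2 ^ 2) := by
  have hθ0 : θ ≠ 0 := hθ ▸ norm_ne_zero_iff.mpr hψ
  have hcube : hat ψ ^ 3 = (-θ ^ 2) • hat ψ := hθ ▸ hat_pow_three ψ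
  have hexp : NormedSpace.exp (hat ψ) = _ := exp_eq_rodrigues_of_pow_three_eq hθ0 hcube
  rw [hA, trace_sub, trace_transpose_mul_of_orthogonal hU.1 hV.1, diagonal_transpose, hexp]
  simp only [Matrix.mul_add, Matrix.mul_smul, Matrix.mul_one, trace_add, trace_smul,
    trace_diagonal_mul_hat, trace_diagonal_mul_hat_sq, smul_eq_mul, cons_val_zero, cons_val_one,
    cons_val_two, tail_cons, head_cons]
  ring
end
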